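/- arXiv:1304.6848 — 3 statements merged into one kernel-verified Lean document; each statement's English description precedes it below -/
import Mathlib

section
/- Let V be a vector space over a field K. For every cardinal λ ≤ Module.rank K V there exists a family 𝓕 ⊆ V with HL(𝓕) = L(𝓕) = Order.succ λ (the cardinal successor of λ). In particular, every successor cardinal κ ≤ (dim V)⁺ is attained as a common value of the homogeneous lineability number and the lineability number of some subset of V. -/
open Cardinal

/-- The lineability number of `𝓕 ⊆ V`: the least cardinal `l` such that `𝓕 ∪ {0}` contains
no `K`-linear subspace of dimension `l`. -/
noncomputable def lineabilityNumber (K V : Type u) [Field K] [AddCommGroup V] [Module K V]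
    (𝓕 : Set V) : Cardinal.{u} :=
  sInf {l : Cardinal.{u} |
    ¬ ∃ W : Submodule K V, (W : Set V) ⊆ 𝓕 ∪ {0} ∧ Module.rank K W = l}

/-- The homogeneous lineability number of `𝓕 ⊆ V`: the least cardinal `l` for which some
subspace `Y ⊆ 𝓕 ∪ {0}` of dimension `< l` cannot be extended to a subspace `X ⊆ 𝓕 ∪ {0}`
of dimension `l`. -/
noncomputable def homLineabilityNumber (K V : Type u) [Field K] [AddCommGroup V] [Module K V]
    (𝓕 : Set V) : Cardinal.{u} :=
  sInf {l : Cardinal.{u} |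
    ∃ Y : Submodule K V, (Y : Set V) ⊆ 𝓕 ∪ {0} ∧ Module.rank K Y < l ∧
      ¬ ∃ X : Submodule K V, Y ≤ X ∧ (X : Set V) ⊆ 𝓕 ∪ {0} ∧ Module.rank K X = l}

/-!
A subspace `W` of dimension `λ` is the required family. The subspaces inside `W ∪ {0}` are
exactly the subspaces of `W`, and every subspace of `W` of dimension `≤ c ≤ λ` extends inside `W`
to one of dimension exactly `c` (extend a basis and take an intermediate set of the right
cardinality). So both defining sets of cardinals are `{c | λ < c}`, whose infimum is `λ⁺`.
-/

theorem Cardinal.exists_superset_subset_mk_eq {α : Type u} {s t : Set α} {c : Cardinal.{u}}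
    (hst : s ⊆ t) (hs : #s ≤ c) (ht : c ≤ #t) : ∃ r, s ⊆ r ∧ r ⊆ t ∧ #r = c := by
  rcases lt_or_ge c ℵ₀ with hc | hc
  · obtain ⟨n, rfl⟩ := lt_aleph0.1 hc
    obtain ⟨r, hsr, hrt, hr⟩ := Set.exists_superset_subset_encard_eq (k := n) hst
      (by simpa using toENat.monotone' hs) (by simpa using toENat.monotone' ht)
    exact ⟨r, hsr, hrt, toENat_eq_natCast.1 hr⟩
  · obtain ⟨p, hpt, hp⟩ := le_mk_iff_exists_subset.1 ht
    refine ⟨s ∪ p, Set.subset_union_left, Set.union_subset hst hpt, le_antisymm ?_ ?_⟩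
    · calc #(s ∪ p : Set α) ≤ #s + #p := mk_union_le s p
        _ ≤ c + c := add_le_add hs hp.le
        _ = c := add_eq_self hc
    · exact hp ▸ mk_le_mk_of_subset Set.subset_union_right

theorem Submodule.exists_le_le_rank_eq {K V : Type u} [DivisionRing K] [AddCommGroup V]
    [Module K V] {Y W : Submodule K V} {c : Cardinal.{u}} (hYW : Y ≤ W)
    (hY : Module.rank K Y ≤ c) (hW : c ≤ Module.rank K W) :
    ∃ X : Submodule K V, Y ≤ X ∧ X ≤ W ∧ Module.rank K X = c := by
  obtain ⟨b, hbY, hspan_b, hb⟩ := exists_linearIndependent K (Y : Set V)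
  rw [span_eq] at hspan_b
  obtain ⟨u, huW, hbu, hWu, hu⟩ := exists_linearIndepOn_id_extension hb (hbY.trans hYW)
  have hspan_u : span K u = W := le_antisymm (span_le.2 huW) (by simpa using hWu)
  obtain ⟨v, hbv, hvu, hv⟩ := Cardinal.exists_superset_subset_mk_eq (c := c) hbu
    (by rwa [← rank_span_set hb, hspan_b]) (by rwa [← rank_span_set hu, hspan_u])
  refine ⟨span K v, hspan_b ▸ span_mono hbv, hspan_u ▸ span_mono hvu, ?_⟩
  rw [rank_span_set (hu.mono hvu), hv]

theorem Submodule.coe_subset_coe_union_zero_iff {R M : Type*} [Semiring R] [AddCommMonoid M]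
    [Module R M] {X W : Submodule R M} : (X : Set M) ⊆ W ∪ {0} ↔ X ≤ W := by
  rw [Set.union_singleton, Set.insert_eq_of_mem W.zero_mem]
  exact SetLike.coe_subset_coe

section Submodule

variable {K V : Type u} [Field K] [AddCommGroup V] [Module K V]

theorem lineabilityNumber_submodule (W : Submodule K V) :
    lineabilityNumber K V W = Order.succ (Module.rank K W) := by
  rw [Order.succ_eq_csInf, lineabilityNumber]
  congr 1
  ext c
  simp only [Set.mem_ofPred_eq, Set.mem_Ioi, Submodule.coe_subset_coe_union_zero_iff]
  constructor
  · intro hno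
    by_contra! hc
    obtain ⟨X, -, hXW, hX⟩ := Submodule.exists_le_le_rank_eq bot_le (by simp) hc
    exact hno ⟨X, hXW, hX⟩
  · rintro hc ⟨X, hXW, rfl⟩
    exact (Submodule.rank_mono hXW).not_gt hc

theorem homLineabilityNumber_submodule (W : Submodule K V) :
    homLineabilityNumber K V W = Order.succ (Module.rank K W) := by
  rw [Order.succ_eq_csInf, homLineabilityNumber]
  congr 1
  ext c
  simp only [Set.mem_ofPred_eq, Set.mem_Ioi, Submodule.coe_subset_coe_union_zero_iff]
  constructor
  · rintro ⟨Y, hYW, hYc, hno⟩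
    by_contra! hc
    obtain ⟨X, hYX, hXW, hX⟩ := Submodule.exists_le_le_rank_eq hYW hYc.le hc
    exact hno ⟨X, hYX, hXW, hX⟩
  · intro hc
    refine ⟨⊥, bot_le, (rank_bot K V).trans_lt (zero_le.trans_lt hc), ?_⟩
    rintro ⟨X, -, hXW, rfl⟩
    exact (Submodule.rank_mono hXW).not_gt hc

end Submodule

/-- **Proposition (ii).** For every cardinal `λ ≤ dim V` there is a family `𝓕 ⊆ V` with
`HL(𝓕) = L(𝓕) = λ⁺` (the cardinal successor of `λ`); thus every successor cardinal
`≤ (dim V)⁺` is attained as a common value of both numbers. -/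
theorem exists_family_homLineability_eq_lineability_eq_succ {K V : Type u} [Field K]
    [AddCommGroup V] [Module K V] (l : Cardinal.{u}) (hl : l ≤ Module.rank K V) :
    ∃ 𝓕 : Set V, homLineabilityNumber K V 𝓕 = Order.succ l ∧
      lineabilityNumber K V 𝓕 = Order.succ l := by
  obtain ⟨W, -, -, hW⟩ :=
    Submodule.exists_le_le_rank_eq (c := l) (bot_le : ⊥ ≤ (⊤ : Submodule K V)) (by simp)
      (by rwa [rank_top])
  exact ⟨W, by rw [homLineabilityNumber_submodule, hW], by rw [lineabilityNumber_submodule, hW]⟩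
end

section
/- Let X be a nontrivial separable Banach space over ℝ, and let K be a subfield of ℝ with #K < add(𝓜_X), where add(𝓜_X) = sInf { #𝓖 : every member of 𝓖 is a meager subset of X and ⋃₀ 𝓖 is not meager in X }. Let 𝓕 ⊆ X be residual (i.e., X \ 𝓕 is meager) and star-like over K (a • f ∈ 𝓕 for every a ∈ K \ {0} and f ∈ 𝓕). Regard X as a vector space over K by restriction of scalars. Then every K-linear subspace Y of X with Y ⊆ 𝓕 ∪ {0} and dim_K Y < add(𝓜_X) is contained in a K-linear subspace W of X with W ⊆ 𝓕 ∪ {0} and dim_K W = add(𝓜_X); in particular, 𝓕 ∪ {0} contains a K-linear subspace of uncountable dimension (dimension at least ℵ₁). -/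
/-!
Zorn's lemma gives a maximal `K`-subspace `M ⊆ 𝓕 ∪ {0}` containing `Y`. If `dim_K M < add(𝓜_X)`
then also `#M < add(𝓜_X)`, because `#K < add(𝓜_X)`. Hence `M` together with the fewer than
`add(𝓜_X)` meagre sets `{x | a • x + y ∉ 𝓕}`, `a ∈ K ∖ {0}`, `y ∈ M`, is meagre, and any `x`
outside their union extends `M` to `M ⊕ K x ⊆ 𝓕 ∪ {0}`, contradicting maximality. So
`dim_K M ≥ add(𝓜_X)`, and `W = Y ⊔ N` for any `N ≤ M` of dimension `add(𝓜_X)`. Finally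
`add(𝓜_X) ≥ ℵ₁` because countable unions of meagre sets are meagre.
-/

open Cardinal

set_option synthInstance.maxHeartbeats 1000000

/-- The additivity of the σ-ideal of meager subsets of a topological space `X`: the least
cardinality of a family of meager sets whose union is not meager. -/
noncomputable def addMeagre (X : Type u) [TopologicalSpace X] : Cardinal.{u} :=
  sInf {c : Cardinal.{u} |
    ∃ 𝓖 : Set (Set X), (∀ A ∈ 𝓖, IsMeagre A) ∧ ¬ IsMeagre (⋃₀ 𝓖) ∧ #𝓖 = c}

open Set Filter Topology

theorem Cardinal.lift_mk_lt_of_lift_rank_lt {K : Type v} {V : Type w} [DivisionRing K] [Infinite K]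
    [AddCommGroup V] [Module K V] {κ : Cardinal.{max v w}} (hK : lift.{w} #K < κ)
    (hV : lift.{v} (Module.rank K V) < κ) : lift.{v} #V < κ := by
  by_cases h : lift.{w} #K < lift.{v} #V
  · rwa [← Module.Free.rank_eq_mk_of_infinite_lt K V h]
  · exact (not_lt.1 h).trans_lt hK

section Meagre

variable {X : Type u} [TopologicalSpace X]

theorem isMeagre_singleton [T1Space X] (x : X) [(𝓝[≠] x).NeBot] : IsMeagre ({x} : Set X) :=
  residual_of_dense_open isOpen_compl_singleton (dense_compl_singleton x)

theorem IsMeagre.preimage_smul_add {K : Type*} [GroupWithZero K] [AddGroup X] [ContinuousAdd X]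
    [MulAction K X] [ContinuousConstSMul K X] {s : Set X} (hs : IsMeagre s) {a : K} (ha : a ≠ 0)
    (y : X) : IsMeagre ((fun x ↦ a • x + y) ⁻¹' s) :=
  let e := (Homeomorph.smulOfNeZero a ha).trans (Homeomorph.addRight y)
  hs.preimage_of_isOpenMap e.continuous e.isOpenMap

theorem addMeagre_le_mk {𝓖 : Set (Set X)} (h𝓖 : ∀ A ∈ 𝓖, IsMeagre A) (hU : ¬IsMeagre (⋃₀ 𝓖)) :
    addMeagre X ≤ #𝓖 :=
  csInf_le' ⟨𝓖, h𝓖, hU, rfl⟩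

theorem isMeagre_iUnion_of_lift_mk_lt_addMeagre {ι : Type w} {f : ι → Set X}
    (hf : ∀ i, IsMeagre (f i)) (hι : lift.{u} #ι < lift.{w} (addMeagre X)) :
    IsMeagre (⋃ i, f i) := by
  by_contra hU
  have := addMeagre_le_mk (forall_mem_range.2 hf) (by rwa [sUnion_range])
  exact ((lift_le.2 this).trans mk_range_le_lift).not_gt hι

theorem isMeagre_of_mk_lt_addMeagre [T1Space X] [∀ x : X, (𝓝[≠] x).NeBot] {s : Set X}
    (hs : #s < addMeagre X) : IsMeagre s := by
  simpa using isMeagre_iUnion_of_lift_mk_lt_addMeagre (fun x : s ↦ isMeagre_singleton (x : X))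
    (by simpa using hs)

theorem aleph0_lt_addMeagre [BaireSpace X] [Nonempty X] [T1Space X] [∀ x : X, (𝓝[≠] x).NeBot] :
    ℵ₀ < addMeagre X := by
  rw [← Order.succ_le_iff]
  refine le_csInf ⟨_, range singleton, forall_mem_range.2 fun x ↦ isMeagre_singleton x, ?_, rfl⟩ ?_
  · rw [sUnion_range, iUnion_of_singleton]
    exact not_isMeagre_of_isOpen (isOpen_univ (X := X)) univ_nonempty
  · rintro _ ⟨𝓖, h𝓖, hU, rfl⟩
    rw [Order.succ_le_iff]
    by_contra! h
    have := (le_aleph0_iff_set_countable.1 h).to_subtype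
    exact hU (sUnion_eq_iUnion ▸ isMeagre_iUnion fun A : 𝓖 ↦ h𝓖 A A.2)

end Meagre

namespace Submodule

theorem exists_le_maximal_coe_subset {R M : Type*} [Semiring R] [AddCommMonoid M] [Module R M]
    {S : Set M} {Y : Submodule R M} (hY : (Y : Set M) ⊆ S) :
    ∃ N, Y ≤ N ∧ Maximal (fun N : Submodule R M ↦ (N : Set M) ⊆ S) N := by
  refine zorn_le_nonempty₀ _ (fun c hcS hc N hN ↦ ⟨sSup c, ?_, fun _ ↦ le_sSup⟩) Y hY
  intro x hx
  obtain ⟨N', hN'c, hxN'⟩ := (mem_sSup_of_directed ⟨N, hN⟩ hc.directedOn).1 hx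
  exact hcS hN'c hxN'

theorem coe_sup_span_singleton_subset {R M : Type*} [Ring R] [AddCommGroup M] [Module R M]
    {N : Submodule R M} {S : Set M} {x : M} (hN : (N : Set M) ⊆ S ∪ {0})
    (hx : ∀ a : R, a ≠ 0 → ∀ y ∈ N, a • x + y ∈ S) :
    ((N ⊔ R ∙ x : Submodule R M) : Set M) ⊆ S ∪ {0} := by
  rintro _ hz
  obtain ⟨y, hy, _, hax, rfl⟩ := mem_sup.1 hz
  obtain ⟨a, rfl⟩ := mem_span_singleton.1 hax
  by_cases ha : a = 0
  · simpa [ha] using hN hy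
  · exact .inl (add_comm y _ ▸ hx a ha y hy)

variable {K V : Type*} [DivisionRing K] [AddCommGroup V] [Module K V]

theorem exists_le_rank_eq {M : Submodule K V} {κ : Cardinal} (h : κ ≤ Module.rank K M) :
    ∃ N ≤ M, Module.rank K N = κ := by
  let b := Module.Basis.ofVectorSpace K M
  obtain ⟨s, hs⟩ := le_mk_iff_exists_set.1 (b.mk_eq_rank''.symm ▸ h)
  have hli : LinearIndependent K fun i : s ↦ (b i : V) :=
    (b.linearIndependent.map' M.subtype M.ker_subtype).comp _ Subtype.val_injective
  refine ⟨span K (range fun i : s ↦ (b i : V)), span_le.2 (range_subset_iff.2 fun i ↦ (b i).2), ?_⟩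
  rw [rank_span hli, mk_range_eq _ hli.injective, hs]

theorem exists_le_le_rank_eq_s11 {Y M : Submodule K V} {κ : Cardinal} (hYM : Y ≤ M)
    (hY : Module.rank K Y ≤ κ) (hM : κ ≤ Module.rank K M) (hκ : ℵ₀ ≤ κ) :
    ∃ W, Y ≤ W ∧ W ≤ M ∧ Module.rank K W = κ := by
  obtain ⟨N, hNM, hN⟩ := exists_le_rank_eq hM
  refine ⟨Y ⊔ N, le_sup_left, sup_le hYM hNM, le_antisymm ?_ (hN ▸ rank_mono le_sup_right)⟩
  calc Module.rank K ↥(Y ⊔ N) ≤ Module.rank K Y + Module.rank K N := rank_add_le_rank_add_rank _ _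
    _ = κ := by rw [hN, add_eq_right hκ hY]

end Submodule

section Extension

variable {K : Type v} {X : Type u} [DivisionRing K] [TopologicalSpace X] [AddCommGroup X]
  [Module K X] [ContinuousAdd X] [ContinuousConstSMul K X] [BaireSpace X] [T1Space X]
  [∀ x : X, (𝓝[≠] x).NeBot]

theorem exists_notMem_forall_smul_add_mem {S : Set X} (hS : IsMeagre Sᶜ)
    (hK : lift.{u} #K < lift.{v} (addMeagre X)) (Z : Submodule K X) (hZ : #Z < addMeagre X) :
    ∃ x ∉ Z, ∀ a : K, a ≠ 0 → ∀ y ∈ Z, a • x + y ∈ S := by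
  have hcard : lift.{u} #({a : K // a ≠ 0} × Z) < lift.{max u v} (addMeagre X) := by
    rw [mk_prod, lift_mul, lift_lift, lift_lift, lift_umax.{u, v}]
    exact mul_lt_of_lt (aleph0_le_lift.2 aleph0_lt_addMeagre.le)
      ((lift_le.2 (mk_subtype_le _)).trans_lt hK) (lift_lt.2 hZ)
  have hbad : IsMeagre ((Z : Set X) ∪
      ⋃ p : {a : K // a ≠ 0} × Z, (fun x ↦ p.1.1 • x + p.2) ⁻¹' Sᶜ) :=
    (isMeagre_of_mk_lt_addMeagre hZ).union <|
      isMeagre_iUnion_of_lift_mk_lt_addMeagre (fun p ↦ hS.preimage_smul_add p.1.2 p.2) hcard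
  obtain ⟨x, hx⟩ := (dense_of_mem_residual hbad).nonempty
  simp only [compl_union, mem_inter_iff, mem_compl_iff, mem_iUnion, mem_preimage, not_exists,
    not_not] at hx
  exact ⟨x, hx.1, fun a ha y hy ↦ hx.2 (⟨a, ha⟩, ⟨y, hy⟩)⟩

theorem addMeagre_le_rank_of_maximal [Infinite K] {S : Set X} (hS : IsMeagre Sᶜ)
    (hK : lift.{u} #K < lift.{v} (addMeagre X)) {M : Submodule K X}
    (hM : Maximal (fun N : Submodule K X ↦ (N : Set X) ⊆ S ∪ {0}) M) :
    addMeagre X ≤ Module.rank K M := by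
  by_contra! hlt
  have hcard : #M < addMeagre X := lift_lt.1 (lift_mk_lt_of_lift_rank_lt hK (lift_lt.2 hlt))
  obtain ⟨x, hxM, hx⟩ := exists_notMem_forall_smul_add_mem hS hK M hcard
  exact hxM <| hM.2 (Submodule.coe_sup_span_singleton_subset hM.1 hx) le_sup_left
    (Submodule.mem_sup_right (Submodule.mem_span_singleton_self x))

theorem exists_le_coe_subset_rank_eq_addMeagre [Infinite K] {S : Set X} (hS : IsMeagre Sᶜ)
    (hK : lift.{u} #K < lift.{v} (addMeagre X)) {Y : Submodule K X}
    (hY : (Y : Set X) ⊆ S ∪ {0}) (hYr : Module.rank K Y < addMeagre X) :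
    ∃ W : Submodule K X, Y ≤ W ∧ (W : Set X) ⊆ S ∪ {0} ∧ Module.rank K W = addMeagre X := by
  obtain ⟨M, hYM, hM⟩ := Submodule.exists_le_maximal_coe_subset hY
  obtain ⟨W, hYW, hWM, hW⟩ := Submodule.exists_le_le_rank_eq_s11 hYM hYr.le
    (addMeagre_le_rank_of_maximal hS hK hM) aleph0_lt_addMeagre.le
  exact ⟨W, hYW, (SetLike.coe_mono hWM).trans hM.1, hW⟩

end Extension

theorem residual_starLike_homLineable_general {X : Type u} [NormedAddCommGroup X]
    [NormedSpace ℝ X] [CompleteSpace X] [Nontrivial X]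
    (K : Subfield ℝ) (hK : Cardinal.lift.{u} #K < addMeagre X)
    (𝓕 : Set X) (hres : IsMeagre 𝓕ᶜ) :
    (∀ Y : Submodule K X, (Y : Set X) ⊆ 𝓕 ∪ {0} → Module.rank K Y < addMeagre X →
      ∃ W : Submodule K X, Y ≤ W ∧ (W : Set X) ⊆ 𝓕 ∪ {0} ∧
        Module.rank K W = addMeagre X) ∧
    ∃ W : Submodule K X, (W : Set X) ⊆ 𝓕 ∪ {0} ∧
      Cardinal.aleph 1 ≤ Module.rank K W := by
  have extend Y hY hYr :=
    exists_le_coe_subset_rank_eq_addMeagre (Y := Y) hres (by rwa [lift_uzero]) hY hYr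
  obtain ⟨W, -, hW𝓕, hW⟩ :=
    extend ⊥ (by simp) (rank_bot K X ▸ aleph0_pos.trans aleph0_lt_addMeagre)
  exact ⟨extend, W, hW𝓕, hW ▸ succ_aleph0 ▸ Order.succ_le_of_lt aleph0_lt_addMeagre⟩

/-- **Theorem.** Let `X` be a nontrivial separable Banach space, `K ⊆ ℝ` a subfield with
`#K < add(𝓜_X)`, and `𝓕 ⊆ X` a residual star-like family (over `K`). Viewing `X` as a
`K`-vector space, every `K`-subspace of `𝓕 ∪ {0}` of dimension `< add(𝓜_X)` extends to a
`K`-subspace of `𝓕 ∪ {0}` of dimension exactly `add(𝓜_X)`; in particular `𝓕 ∪ {0}`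
contains a `K`-subspace of uncountable dimension. -/
theorem residual_starLike_homLineable {X : Type u} [NormedAddCommGroup X]
    [NormedSpace ℝ X] [CompleteSpace X] [TopologicalSpace.SeparableSpace X] [Nontrivial X]
    (K : Subfield ℝ) (hK : Cardinal.lift.{u} #K < addMeagre X)
    (𝓕 : Set X) (hres : IsMeagre 𝓕ᶜ)
    (hstar : ∀ a : K, a ≠ 0 → ∀ f ∈ 𝓕, (a : ℝ) • f ∈ 𝓕) :
    (∀ Y : Submodule K X, (Y : Set X) ⊆ 𝓕 ∪ {0} → Module.rank K Y < addMeagre X →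
      ∃ W : Submodule K X, Y ≤ W ∧ (W : Set X) ⊆ 𝓕 ∪ {0} ∧
        Module.rank K W = addMeagre X) ∧
    ∃ W : Submodule K X, (W : Set X) ⊆ 𝓕 ∪ {0} ∧
      Cardinal.aleph 1 ≤ Module.rank K W :=
  residual_starLike_homLineable_general K hK 𝓕 hres
end

section
/- The family AC(ℝ) of almost continuous functions (in the sense of Stallings) has property B(e_𝔠, 𝔠): there exists a set 𝓑 of ℝ-linear subspaces of ℝ^ℝ with #𝓑 ≥ 𝔠 such that every B ∈ 𝓑 satisfies B ⊆ AC(ℝ) ∪ {0} and dim_ℝ B ≥ e_𝔠, and AC(ℝ) ∪ {0} = ⋃ 𝓑. -/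
/-!
A closed set `K ⊆ ℝ²` that meets every continuous graph and contains no vertical line projects
onto at least `𝔠` points. Otherwise, over any interval, `K` misses a whole vertical strip of any
bounded band of heights, and a continuous graph avoiding `K` is built by following free heights
and switching between them inside such strips.

There are only `𝔠` closed sets, so each such `K` can be given `𝔠` private points of its
projection; the definition of `e_𝔠` then yields, for fewer than `e_𝔠` functions `w`, a single `h`
such that every `c • h + w` with `c ≠ 0` meets every blocking set, i.e. is almost continuous.
A recursion of length `e_𝔠`, each step generic over the span of the previous ones and over its
translate by a step function that is not almost continuous (which keeps the family independent),
puts every `f ∈ AC(ℝ) ∪ {0}` into a subspace of dimension `e_𝔠` inside `AC(ℝ) ∪ {0}`. The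
hyperplanes spanned by all but one vector of such a family give `e_𝔠 > 𝔠` distinct subspaces.
-/

open Cardinal

/-- `f` is almost continuous in the sense of Stallings: every open subset of `ℝ²`
containing the graph of `f` contains the graph of some continuous function. -/
def IsAlmostContinuous (f : ℝ → ℝ) : Prop :=
  ∀ O : Set (ℝ × ℝ), IsOpen O → {p : ℝ × ℝ | p.2 = f p.1} ⊆ O →
    ∃ g : ℝ → ℝ, Continuous g ∧ {p : ℝ × ℝ | p.2 = g p.1} ⊆ O

/-- The cardinal `e_𝔠`: the least cardinality of a family `F ⊆ ℝ^ℝ` such that every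
`φ : ℝ → ℝ` agrees with some member of `F` on a set of cardinality `< 𝔠`. -/
noncomputable def eContinuum : Cardinal :=
  sInf {c : Cardinal | ∃ F : Set (ℝ → ℝ), #F = c ∧
    ∀ φ : ℝ → ℝ, ∃ f ∈ F, #{x : ℝ | f x = φ x} < Cardinal.continuum}

universe u

open Set Function Filter Topology TopologicalSpace Submodule

def IsBlocking (K : Set (ℝ × ℝ)) : Prop :=
  IsClosed K ∧ ∀ g : ℝ → ℝ, Continuous g → ∃ x, (x, g x) ∈ K

theorem IsAlmostContinuous.of_forall_isBlocking {f : ℝ → ℝ}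
    (h : ∀ K, IsBlocking K → ∃ x, (x, f x) ∈ K) : IsAlmostContinuous f := by
  intro O hO hfO
  by_contra! hO'
  have hblock : IsBlocking Oᶜ := ⟨hO.isClosed_compl, fun g hg => by
    obtain ⟨⟨x, y⟩, hy : y = g x, hxy⟩ := not_subset.1 (hO' g hg)
    exact ⟨x, hy ▸ hxy⟩⟩
  obtain ⟨x, hx⟩ := h Oᶜ hblock
  exact hx (hfO rfl)

theorem IsAlmostContinuous.const_smul {f : ℝ → ℝ} (hf : IsAlmostContinuous f) (c : ℝ) :
    IsAlmostContinuous (c • f) := by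
  intro O hO hfO
  have hscale : Continuous fun p : ℝ × ℝ => (p.1, c * p.2) := by fun_prop
  obtain ⟨g, hg, hgO⟩ := hf _ (hO.preimage hscale) fun p (hp : p.2 = f p.1) => by
    simpa [hp] using hfO (show (p.1, c * f p.1) ∈ {p : ℝ × ℝ | p.2 = (c • f) p.1} from rfl)
  refine ⟨c • g, hg.const_smul c, fun p (hp : p.2 = c * g p.1) => ?_⟩
  simpa [← hp] using hgO (show (p.1, g p.1) ∈ {p : ℝ × ℝ | p.2 = g p.1} from rfl)

theorem not_isAlmostContinuous_ite_le_zero :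
    ¬ IsAlmostContinuous fun x : ℝ => if x ≤ 0 then 0 else 1 := by
  intro h
  let O : Set (ℝ × ℝ) := {p | p.1 < 1 ∧ |p.2| < 1 / 3} ∪ {p | 0 < p.1 ∧ |p.2 - 1| < 1 / 3}
  have hO : IsOpen O := by
    refine IsOpen.union ?_ ?_ <;> refine (isOpen_lt ?_ ?_).and (isOpen_lt ?_ ?_) <;> fun_prop
  obtain ⟨g, hg, hgO⟩ := h O hO fun p (hp : p.2 = if p.1 ≤ 0 then 0 else 1) => by
    split_ifs at hp with hp1
    · exact Or.inl ⟨by linarith, by norm_num [hp]⟩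
    · exact Or.inr ⟨by linarith, by norm_num [hp]⟩
  have hgO' : ∀ x, (x < 1 ∧ |g x| < 1 / 3) ∨ (0 < x ∧ |g x - 1| < 1 / 3) := fun x =>
    hgO (show (x, g x) ∈ {p : ℝ × ℝ | p.2 = g p.1} from rfl)
  -- a continuous selection of `O` must cross the height `1/2`, where `O` has no points
  obtain ⟨x, -, hx⟩ := intermediate_value_Icc (zero_le_one' ℝ) hg.continuousOn
    (show (1 / 2 : ℝ) ∈ Icc (g 0) (g 1) by
      constructor
      · rcases hgO' 0 with h0 | h0
        · linarith [abs_lt.1 h0.2]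
        · linarith [h0.1]
      · rcases hgO' 1 with h1 | h1
        · linarith [h1.1]
        · linarith [abs_lt.1 h1.2])
  rcases hgO' x with hx' | hx' <;> linarith [abs_lt.1 hx'.2]

section Avoidance

variable {K : Set (ℝ × ℝ)}

def JoinedOutside (K : Set (ℝ × ℝ)) (p q : ℝ × ℝ) : Prop :=
  ∃ g : ℝ → ℝ, Continuous g ∧ g p.1 = p.2 ∧ g q.1 = q.2 ∧ ∀ x ∈ Icc p.1 q.1, (x, g x) ∉ K

theorem joinedOutside_const {s t y : ℝ} (h : ∀ x ∈ Icc s t, (x, y) ∉ K) :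
    JoinedOutside K (s, y) (t, y) :=
  ⟨fun _ => y, continuous_const, rfl, rfl, h⟩

theorem JoinedOutside.trans {p q r : ℝ × ℝ} (hpq : JoinedOutside K p q)
    (hqr : JoinedOutside K q r) (hp : p.1 ≤ q.1) (hr : q.1 ≤ r.1) : JoinedOutside K p r := by
  obtain ⟨g₁, hg₁, hg₁p, hg₁q, hg₁K⟩ := hpq
  obtain ⟨g₂, hg₂, hg₂q, hg₂r, hg₂K⟩ := hqr
  refine ⟨fun x => if x ≤ q.1 then g₁ x else g₂ x,
    hg₁.if_le hg₂ continuous_id continuous_const fun x hx => by rw [hx, hg₁q, hg₂q], ?_, ?_, ?_⟩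
  · simp only [if_pos hp, hg₁p]
  · dsimp only
    split_ifs with h
    · rw [le_antisymm h hr, hg₁q, ← hg₂q, ← le_antisymm h hr, hg₂r]
    · exact hg₂r
  · intro x hx
    dsimp only
    split_ifs with h
    · exact hg₁K x ⟨hx.1, h⟩
    · exact hg₂K x ⟨(not_le.1 h).le, hx.2⟩

theorem JoinedOutside.exists_of_le {p q : ℝ × ℝ} (h : JoinedOutside K p q) {t : ℝ}
    (ht : t ≤ q.1) : ∃ z, JoinedOutside K p (t, z) ∧ (p.1 ≤ t → (t, z) ∉ K) := by
  obtain ⟨g, hg, hgp, -, hgK⟩ := h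
  exact ⟨g t, ⟨g, hg, hgp, rfl, fun x hx => hgK x ⟨hx.1, hx.2.trans ht⟩⟩,
    fun hpt => hgK t ⟨hpt, ht⟩⟩

theorem exists_pos_forall_Icc_notMem (hK : IsClosed K) {x y : ℝ} (h : (x, y) ∉ K) :
    ∃ r > 0, ∀ x' ∈ Icc (x - r) (x + r), (x', y) ∉ K := by
  have : (fun x' => (x', y)) ⁻¹' Kᶜ ∈ 𝓝 x :=
    (hK.isOpen_compl.preimage (by fun_prop)).mem_nhds h
  obtain ⟨r, hr, hrK⟩ := Metric.nhds_basis_closedBall.mem_iff.1 this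
  exact ⟨r, hr, fun x' hx' => hrK (Real.closedBall_eq_Icc ▸ hx')⟩

variable (hK : IsClosed K) (hD : #(Prod.fst '' K) < 𝔠)
include hK hD

/-- The columns meeting the band `[A, B]` form a closed set of fewer than `𝔠` points. -/
theorem exists_Icc_prod_Icc_disjoint (A B : ℝ) {p q : ℝ} (hpq : p < q) :
    ∃ u v, p < u ∧ u < v ∧ v < q ∧ ∀ x ∈ Icc u v, ∀ y ∈ Icc A B, (x, y) ∉ K := by
  set E := Prod.fst '' ((fun z : ℝ × Icc A B => (z.1, (z.2 : ℝ))) ⁻¹' K)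
  have hE : IsClosed E := by
    have : CompactSpace (Icc A B) := isCompact_iff_compactSpace.1 isCompact_Icc
    exact isClosedMap_fst_of_compactSpace _ (hK.preimage (by fun_prop))
  have hEK : E ⊆ Prod.fst '' K := by
    rintro _ ⟨z, hz, rfl⟩
    exact ⟨_, hz, rfl⟩
  obtain ⟨x₀, hx₀, hx₀E⟩ : (Ioo p q \ E).Nonempty := sdiff_nonempty_of_mk_lt_mk <| by
    rw [mk_Ioo_real hpq]
    exact (mk_le_mk_of_subset hEK).trans_lt hD
  obtain ⟨ε, hε, hεE⟩ := Metric.nhds_basis_closedBall.mem_iff.1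
    (inter_mem (hE.isOpen_compl.mem_nhds hx₀E) (Ioo_mem_nhds hx₀.1 hx₀.2))
  rw [Real.closedBall_eq_Icc] at hεE
  refine ⟨x₀ - ε, x₀ + ε, (hεE ⟨le_rfl, by linarith⟩).2.1, by linarith,
    (hεE ⟨by linarith, le_rfl⟩).2.2, fun x hx y hy hxy => (hεE hx).1 ⟨(x, ⟨y, hy⟩), hxy, rfl⟩⟩

/-- Follow height `y` to the right of `s`, cross to height `y'` inside a clear strip over
`(p, q)`, and follow height `y'` up to `t`. -/
theorem joinedOutside_of_forall_Icc {s t y y' p q : ℝ} (hsp : s ≤ p) (hpq : p < q)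
    (hqt : q ≤ t)    (hy : ∀ x ∈ Icc s q, (x, y) ∉ K) (hy' : ∀ x ∈ Icc p t, (x, y') ∉ K) :
    JoinedOutside K (s, y) (t, y') := by
  obtain ⟨u, v, hpu, huv, hvq, hstrip⟩ :=
    exists_Icc_prod_Icc_disjoint hK hD (min y y') (max y y') hpq
  let θ : ℝ → Icc (0 : ℝ) 1 := fun x => projIcc 0 1 zero_le_one ((x - u) / (v - u))
  have hθ₀ : ∀ x ≤ u, θ x = 0 := fun x hx =>
    projIcc_of_le_left _ (div_nonpos_of_nonpos_of_nonneg (by linarith) (by linarith))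
  have hθ₁ : ∀ x ≥ v, θ x = 1 := fun x hx =>
    projIcc_of_right_le _ ((one_le_div (by linarith)).2 (by linarith))
  refine ⟨fun x => AffineMap.lineMap y y' (θ x : ℝ), ?_, by simp [hθ₀ s (by linarith)],
    by simp [hθ₁ t (by linarith)], fun x hx => ?_⟩
  · exact (AffineMap.lineMap_continuous).comp (continuous_subtype_val.comp
      (continuous_projIcc.comp ((continuous_id.sub continuous_const).div_const _)))
  rcases le_or_gt x u with hxu | hux
  · simpa [hθ₀ x hxu] using hy x ⟨hx.1, by linarith⟩
  rcases le_or_gt v x with hvx | hxv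
  · simpa [hθ₁ x hvx] using hy' x ⟨by linarith, hx.2⟩
  exact hstrip x ⟨hux.le, hxv.le⟩ _
    ((convex_uIcc y y').lineMap_mem left_mem_uIcc right_mem_uIcc (θ x).2)

theorem joinedOutside_of_forall_Ico {a t y₀ y : ℝ} (hat : a < t) (hty : (t, y) ∉ K)
    (h : ∀ s ∈ Ico a t, ∃ z, JoinedOutside K (a, y₀) (s, z)) :
    JoinedOutside K (a, y₀) (t, y) := by
  obtain ⟨r, hr, hrK⟩ := exists_pos_forall_Icc_notMem hK hty
  set s := max a (t - r / 2)
  have hs : s ∈ Ico a t := ⟨le_max_left _ _, max_lt hat (by linarith)⟩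
  obtain ⟨z, hz⟩ := h s hs
  obtain ⟨z', hz', hszK⟩ := hz.exists_of_le le_rfl
  obtain ⟨ρ, hρ, hρK⟩ := exists_pos_forall_Icc_notMem hK (hszK hs.1)
  have hjump : JoinedOutside K (s, z') (t, y) :=
    joinedOutside_of_forall_Icc hK hD le_rfl (lt_min hs.2 (by linarith)) (min_le_left _ _)
      (fun x hx => hρK x ⟨by linarith [hx.1], hx.2.trans (min_le_right _ _)⟩)
      (fun x hx => hrK x ⟨by linarith [hx.1, le_max_right a (t - r / 2)], by linarith [hx.2]⟩)
  exact hz'.trans hjump hs.1 hs.2.le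

theorem joinedOutside_of_lt (hfib : ∀ x, ∃ y, (x, y) ∉ K) {a b y y' : ℝ} (hab : a < b)
    (hy : (a, y) ∉ K) (hy' : (b, y') ∉ K) : JoinedOutside K (a, y) (b, y') := by
  suffices hreach : ∀ t ≥ a, ∃ z, JoinedOutside K (a, y) (t, z) from
    joinedOutside_of_forall_Ico hK hD hab hy' fun s hs => hreach s hs.1
  by_contra! hfail
  obtain ⟨t₀, ht₀, ht₀F⟩ := hfail
  set F := {t | a ≤ t ∧ ∀ z, ¬ JoinedOutside K (a, y) (t, z)}
  have hF : F.Nonempty := ⟨t₀, ht₀, ht₀F⟩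
  set T := sInf F
  have hFbdd : BddBelow F := ⟨a, fun t ht => ht.1⟩
  have haT : a ≤ T := le_csInf hF fun t ht => ht.1
  have hbelow : ∀ s ∈ Ico a T, ∃ z, JoinedOutside K (a, y) (s, z) := by
    intro s hs
    by_contra! hs'
    exact (csInf_le hFbdd ⟨hs.1, hs'⟩).not_gt hs.2
  -- the infimum `T` of the unreachable points is reachable, hence so is a neighbourhood of it
  obtain ⟨z, hz, hTz⟩ : ∃ z, JoinedOutside K (a, y) (T, z) ∧ (T, z) ∉ K := by
    rcases haT.eq_or_lt with hTa | haT
    · rw [← hTa]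
      exact ⟨y, joinedOutside_const fun x hx => by rwa [le_antisymm hx.2 hx.1], hy⟩
    · obtain ⟨z, hz⟩ := hfib T
      exact ⟨z, joinedOutside_of_forall_Ico hK hD haT hz hbelow, hz⟩
  obtain ⟨ρ, hρ, hρK⟩ := exists_pos_forall_Icc_notMem hK hTz
  have hext : JoinedOutside K (a, y) (T + ρ, z) :=
    hz.trans (joinedOutside_const fun x hx => hρK x ⟨by linarith [hx.1], hx.2⟩) haT
      (by linarith)
  have hTF : T + ρ ≤ T := le_csInf hF fun t ht => by
    by_contra! htρ
    obtain ⟨z', hz', -⟩ := hext.exists_of_le htρ.le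
    exact ht.2 z' hz'
  linarith

theorem exists_continuous_forall_notMem (hfib : ∀ x, ∃ y, (x, y) ∉ K) :
    ∃ g : ℝ → ℝ, Continuous g ∧ ∀ x, (x, g x) ∉ K := by
  choose y hy using fun n : ℤ => hfib n
  have hjoin : ∀ n : ℤ, JoinedOutside K (n, y n) ((n + 1 : ℤ), y (n + 1)) := fun n =>
    joinedOutside_of_lt hK hD hfib (by push_cast; linarith) (hy n) (hy (n + 1))
  choose g hg hgl hgr hgK using hjoin
  push_cast at hgl hgr hgK
  have hEqOn : ∀ n : ℤ, EqOn (fun x => g ⌊x⌋ x) (g n) (Icc n (n + 1)) := by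
    intro n x hx
    rcases hx.2.lt_or_eq with hlt | rfl
    · show g ⌊x⌋ x = g n x
      rw [Int.floor_eq_iff.2 ⟨hx.1, hlt⟩]
    · have hfloor : ⌊(n : ℝ) + 1⌋ = n + 1 := by exact_mod_cast Int.floor_intCast (n + 1)
      have hgl' := hgl (n + 1)
      push_cast at hgl'
      show g ⌊(n : ℝ) + 1⌋ (n + 1) = g n (n + 1)
      rw [hfloor, hgr, hgl']
  refine ⟨fun x => g ⌊x⌋ x, continuous_iff_continuousAt.2 fun x => ?_,
    fun x => hgK _ x ⟨Int.floor_le x, (Int.lt_floor_add_one x).le⟩⟩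
  set m := ⌊x⌋
  have hon : ContinuousOn (fun x => g ⌊x⌋ x) (Icc ((m : ℝ) - 1) (m + 1)) := by
    have h₁ := (hg (m - 1)).continuousOn.congr (hEqOn (m - 1))
    push_cast at h₁
    rw [sub_add_cancel] at h₁
    rw [← Icc_union_Icc_eq_Icc (by linarith) (by linarith)]
    exact h₁.union_of_isClosed ((hg m).continuousOn.congr (hEqOn m)) isClosed_Icc isClosed_Icc
  exact hon.continuousAt (Icc_mem_nhds (by linarith [Int.floor_le x]) (Int.lt_floor_add_one x))

end Avoidance

theorem IsBlocking.continuum_le_mk_image_fst {K : Set (ℝ × ℝ)} (hK : IsBlocking K)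
    (hfib : ∀ x, ∃ y, (x, y) ∉ K) : 𝔠 ≤ #(Prod.fst '' K) := by
  by_contra! hD
  obtain ⟨g, hg, hgK⟩ := exists_continuous_forall_notMem hK.1 hD hfib
  obtain ⟨x, hx⟩ := hK.2 g hg
  exact hgK x hx

theorem exists_forall_continuum_le_mk_eq {ι : Type} (hι : #ι ≤ 𝔠) (f : ι → ℝ → ℝ) :
    ∃ φ : ℝ → ℝ, ∀ i, 𝔠 ≤ #{x | f i x = φ x} := by
  obtain ⟨e⟩ : Nonempty (ι × ℝ ↪ ℝ) := by
    rw [← Cardinal.le_def, mk_prod, lift_id, lift_id, mk_real]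
    exact (mul_le_mul_left hι _).trans continuum_mul_self.le
  -- `φ` copies `f i` on the copy `e (i, ·)` of `ℝ`
  refine ⟨extend e (fun p => f p.1 (e p)) 0, fun i => ?_⟩
  calc 𝔠 = #(range (e ∘ Prod.mk i)) := by
        rw [mk_range_eq _ (e.injective.comp (Prod.mk_right_injective i)), mk_real]
    _ ≤ #{x | f i x = extend e (fun p => f p.1 (e p)) 0 x} := by
        refine mk_le_mk_of_subset ?_
        rintro _ ⟨s, rfl⟩
        exact (e.injective.extend_apply (fun p => f p.1 (e p)) 0 (i, s)).symm

theorem exists_forall_continuum_le_mk_eq_of_lt_eContinuum {ι : Type} (hι : #ι < eContinuum)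
    (f : ι → ℝ → ℝ) : ∃ φ : ℝ → ℝ, ∀ i, 𝔠 ≤ #{x | f i x = φ x} := by
  by_contra! h
  unfold eContinuum at hι
  refine hι.not_ge ((csInf_le' ?_).trans (mk_range_le (f := f)))
  refine ⟨range f, rfl, fun φ => ?_⟩
  obtain ⟨i, hi⟩ := h φ
  exact ⟨f i, mem_range_self i, hi⟩

theorem continuum_lt_eContinuum : 𝔠 < eContinuum := by
  obtain ⟨F, hF, hFφ⟩ : eContinuum ∈ {c : Cardinal | ∃ F : Set (ℝ → ℝ), #F = c ∧
      ∀ φ : ℝ → ℝ, ∃ f ∈ F, #{x : ℝ | f x = φ x} < 𝔠} :=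
    csInf_mem ⟨_, univ, rfl, fun φ => ⟨φ + 1, mem_univ _, by simp [continuum_pos]⟩⟩
  by_contra! he
  obtain ⟨φ, hφ⟩ := exists_forall_continuum_le_mk_eq (hF.trans_le he) (Subtype.val : F → ℝ → ℝ)
  obtain ⟨f, hf, hfφ⟩ := hFφ φ
  exact (hφ ⟨f, hf⟩).not_gt hfφ

theorem aleph0_lt_eContinuum : ℵ₀ < eContinuum :=
  aleph0_lt_continuum.trans continuum_lt_eContinuum

theorem WellFounded.exists_forall_image {ι β : Type*} {r : ι → ι → Prop} (hr : WellFounded r)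
    (P : ι → Set β → β → Prop) (h : ∀ i (f : {j // r j i} → β), ∃ x, P i (range f) x) :
    ∃ F : ι → β, ∀ i, P i (F '' {j | r j i}) (F i) := by
  let F : ι → β := hr.fix fun i rec => (h i fun j => rec j.1 j.2).choose
  refine ⟨F, fun i => ?_⟩
  have hF : F i = (h i fun j => F j.1).choose := hr.fix_eq _ i
  have hrange : range (fun j : {j // r j i} => F j.1) = F '' {j | r j i} := by
    ext; simp
  rw [hF, ← hrange]
  exact (h i _).choose_spec

theorem exists_injective_forall_mem {ι α : Type u} {κ : Cardinal.{u}} {S : ι → Set α}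
    (hι : #ι ≤ κ) (hS : ∀ i, κ ≤ #(S i)) : ∃ p : ι → α, Injective p ∧ ∀ i, p i ∈ S i := by
  obtain ⟨e⟩ : Nonempty (ι ↪ κ.ord.ToType) := by rwa [← Cardinal.le_def, mk_ord_toType]
  obtain ⟨p, hp⟩ := (InvImage.wf e wellFounded_lt).exists_forall_image
    (fun i A x => x ∈ S i \ A) fun i f => by
      refine sdiff_nonempty_of_mk_lt_mk ((mk_range_le.trans ?_).trans_lt
        ((mk_Iio_lt (e i) (by simp)).trans_le ?_))
      · exact mk_le_of_injective (f := fun j : {j // e j < e i} => (⟨e j, j.2⟩ : Iio (e i)))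
          fun j k hjk => Subtype.ext (e.injective (congrArg Subtype.val hjk))
      · simpa using hS i
  refine ⟨p, fun i j hij => ?_, fun i => (hp i).1⟩
  rcases lt_trichotomy (e i) (e j) with h | h | h
  · exact absurd ⟨i, h, hij⟩ (hp j).2
  · exact e.injective h
  · exact absurd ⟨j, h, hij.symm⟩ (hp i).2

theorem mk_setOf_isClosed_le {X : Type u} [TopologicalSpace X] [SecondCountableTopology X] :
    #{K : Set X | IsClosed K} ≤ 𝔠 := by
  -- a closed set is determined by the basic open sets in its complement
  let code : {K : Set X | IsClosed K} → Set (countableBasis X) := fun K => {b | b.1 ⊆ K.1ᶜ}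
  have hcode : Injective code := by
    rintro ⟨K, hK⟩ ⟨L, hL⟩ hKL
    refine Subtype.ext (compl_injective ?_)
    rw [(isBasis_countableBasis X).open_eq_sUnion' hK.isOpen_compl,
      (isBasis_countableBasis X).open_eq_sUnion' hL.isOpen_compl]
    congr 1
    ext b
    exact ⟨fun hb => ⟨hb.1, (Set.ext_iff.1 hKL ⟨b, hb.1⟩).1 hb.2⟩,
      fun hb => ⟨hb.1, (Set.ext_iff.1 hKL ⟨b, hb.1⟩).2 hb.2⟩⟩
  calc #{K : Set X | IsClosed K} ≤ #(Set (countableBasis X)) := mk_le_of_injective hcode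
    _ = 2 ^ #(countableBasis X) := mk_set
    _ ≤ 2 ^ ℵ₀ := power_le_power_left two_ne_zero
        (mk_le_aleph0_iff.2 (countable_countableBasis X))
    _ = 𝔠 := two_power_aleph0

theorem Submodule.mk_span_le {R M : Type u} [Ring R] [Infinite R] [AddCommGroup M] [Module R M]
    (s : Set M) : #(span R s) ≤ max #s #R := by
  calc #(span R s) = #(range (Finsupp.linearCombination R ((↑) : s → M))) := by
        rw [Finsupp.span_eq_range_linearCombination]; rfl
    _ ≤ #(s →₀ R) := mk_range_le
    _ ≤ max #s #R := by
        rcases isEmpty_or_nonempty s with hs | hs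
        · rw [mk_eq_one]
          exact (one_le_aleph0.trans (aleph0_le_mk R)).trans (le_max_right _ _)
        · rw [mk_finsupp_of_infinite']

theorem exists_forall_isAlmostContinuous_smul_add {W : Set (ℝ → ℝ)} (hW : #W < eContinuum) :
    ∃ h : ℝ → ℝ, ∀ c ≠ (0 : ℝ), ∀ w ∈ W, IsAlmostContinuous (c • h + w) := by
  let 𝔅 := {K : Set (ℝ × ℝ) | IsBlocking K ∧ ∀ x, ∃ y, (x, y) ∉ K}
  have h𝔅 : #𝔅 ≤ 𝔠 := (mk_le_mk_of_subset fun K hK => hK.1.1).trans mk_setOf_isClosed_le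
  obtain ⟨p, hp, hpK⟩ := exists_injective_forall_mem (κ := 𝔠)
    (S := fun i : 𝔅 × ℝ => Prod.fst '' i.1.1)
    (by
      rw [mk_prod, lift_id, lift_id, mk_real]
      exact (mul_le_mul_left h𝔅 _).trans continuum_mul_self.le)
    fun i => i.1.2.1.continuum_le_mk_image_fst i.1.2.2
  choose pt hptK hpt using hpK
  -- `h` has to take the value `target (K, w, c) z` at `p (K, z)`, for some `z`
  let target : 𝔅 × W × ℝ → ℝ → ℝ := fun i z =>
    ((pt (i.1, z)).2 - i.2.1.1 (p (i.1, z))) / i.2.2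
  have hindex : #(𝔅 × W × ℝ) < eContinuum := by
    simp only [mk_prod, lift_id]
    exact mul_lt_of_lt aleph0_lt_eContinuum.le (h𝔅.trans_lt continuum_lt_eContinuum)
      (mul_lt_of_lt aleph0_lt_eContinuum.le hW (mk_real ▸ continuum_lt_eContinuum))
  obtain ⟨φ, hφ⟩ := exists_forall_continuum_le_mk_eq_of_lt_eContinuum hindex target
  refine ⟨extend p (fun i => φ i.2) 0, fun c hc w hw => ?_⟩
  refine IsAlmostContinuous.of_forall_isBlocking fun K hK => ?_
  by_cases hfib : ∀ x, ∃ y, (x, y) ∉ K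
  · let i : 𝔅 × W × ℝ := (⟨K, hK, hfib⟩, ⟨w, hw⟩, c)
    obtain ⟨z, hz⟩ : {z | target i z = φ z}.Nonempty :=
      nonempty_coe_sort.1 (mk_ne_zero_iff.1 (continuum_pos.trans_le (hφ i)).ne')
    refine ⟨p (i.1, z), ?_⟩
    convert hptK (i.1, z) using 1
    refine Prod.ext (hpt _).symm ?_
    simp only [Pi.add_apply, Pi.smul_apply, smul_eq_mul, hp.extend_apply]
    rw [← hz]
    show c * (((pt (i.1, z)).2 - w (p (i.1, z))) / c) + _ = _
    field_simp
    ring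
  · obtain ⟨x, hx⟩ := not_forall.1 hfib
    exact ⟨x, not_not.1 (not_exists.1 hx _)⟩

section LinearAlgebra

variable {K : Type*} {M : Type u} [DivisionRing K] [AddCommGroup M] [Module K M]

theorem linearIndependent_of_forall_notMem_span_image_Iio {J : Type*} [LinearOrder J]
    {H : J → M} (h : ∀ j, H j ∉ span K (H '' Iio j)) : LinearIndependent K H := by
  classical
  rw [← linearIndepOn_univ_iff, linearIndepOn_iff_linearIndepOn_finset]
  rintro s -
  induction s using Finset.induction_on_max with
  | empty => simp
  | insert a s hlt ih =>
    rw [Finset.coe_insert, linearIndepOn_insert fun ha => (hlt a ha).false]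
    exact ⟨ih, fun ha => h a (span_mono (image_mono fun x hx => hlt x hx) ha)⟩

theorem forall_mem_span_union_range {J : Type*} [LinearOrder J] {S : Set M} {H : J → M}
    {P : M → Prop} (hS : ∀ v ∈ span K S, P v)
    (hH : ∀ j, ∀ c ≠ (0 : K), ∀ w ∈ span K (S ∪ H '' Iio j), P (c • H j + w)) :
    ∀ v ∈ span K (S ∪ range H), P v := by
  classical
  have hunion : S ∪ range H = ⋃ s : Finset J, S ∪ H '' s := by
    ext x
    simp only [mem_union, mem_iUnion, mem_range, mem_image, Finset.mem_coe]
    constructor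
    · rintro (hx | ⟨j, rfl⟩)
      exacts [⟨∅, Or.inl hx⟩, ⟨{j}, Or.inr ⟨j, Finset.mem_singleton_self j, rfl⟩⟩]
    · rintro ⟨s, hx | ⟨j, -, rfl⟩⟩
      exacts [Or.inl hx, Or.inr ⟨j, rfl⟩]
  intro v hv
  rw [hunion, span_iUnion, mem_iSup_of_directed _ (Monotone.directed_le fun s t hst =>
    span_mono (union_subset_union_right _ (image_mono (Finset.coe_subset.2 hst))))] at hv
  obtain ⟨s, hs⟩ := hv
  induction s using Finset.induction_on_max generalizing v with
  | empty =>
    rw [Finset.coe_empty, image_empty, union_empty] at hs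
    exact hS v hs
  | insert a s hlt ih =>
    rw [Finset.coe_insert, image_insert_eq, union_insert, mem_span_insert] at hs
    obtain ⟨c, w, hw, rfl⟩ := hs
    rcases eq_or_ne c 0 with rfl | hc
    · simpa using ih w hw
    · exact hH a c hc w
        (span_mono (union_subset_union_right _ (image_mono fun x hx => hlt x hx)) hw)

theorem LinearIndependent.injective_span_image_compl_singleton {ι : Type*} {v : ι → M}
    (hv : LinearIndependent K v) : Injective fun i => span K (v '' {i}ᶜ) := by
  intro i j hij
  by_contra hne
  have hj : v j ∈ span K (v '' {i}ᶜ) := subset_span ⟨j, Ne.symm hne, rfl⟩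
  simp only at hij
  rw [hij] at hj
  exact hv.notMem_span_image (s := {j}ᶜ) (notMem_compl_iff.2 rfl) hj

theorem LinearIndependent.rank_span_image {ι : Type u} {v : ι → M} (hv : LinearIndependent K v)
    (s : Set ι) : Module.rank K (span K (v '' s)) = #s := by
  have hvs := hv.comp ((↑) : s → ι) Subtype.val_injective
  rw [image_eq_range]
  exact (rank_span hvs).trans (mk_range_eq _ hvs.injective)

end LinearAlgebra

def almostContinuousOrZero : Set (ℝ → ℝ) := {f | IsAlmostContinuous f} ∪ {0}

theorem smul_mem_almostContinuousOrZero {f : ℝ → ℝ} (hf : f ∈ almostContinuousOrZero)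
    (c : ℝ) : c • f ∈ almostContinuousOrZero := by
  rcases hf with hf | rfl
  · exact Or.inl (hf.const_smul c)
  · exact Or.inr (smul_zero c)

theorem exists_linearIndependent_span_union_range_subset {f₀ : ℝ → ℝ}
    (hf₀ : f₀ ∈ almostContinuousOrZero) :
    ∃ H : eContinuum.ord.ToType → ℝ → ℝ, LinearIndependent ℝ H ∧
      (span ℝ ({f₀} ∪ range H) : Set (ℝ → ℝ)) ⊆ almostContinuousOrZero := by
  let u : ℝ → ℝ := fun x => if x ≤ 0 then 0 else 1
  -- `H j` is generic over the span `V` of `f₀` and the earlier `H i`, and over `u - V`;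
  -- the latter keeps `H j` out of `V`, as `u` is not almost continuous
  obtain ⟨H, hH⟩ := wellFounded_lt.exists_forall_image (ι := eContinuum.ord.ToType)
    (fun _ A h => ∀ c ≠ (0 : ℝ), ∀ w ∈ (span ℝ ({f₀} ∪ A) : Set (ℝ → ℝ)) ∪
      (u - ·) '' span ℝ ({f₀} ∪ A), IsAlmostContinuous (c • h + w))
    fun j (f : Iio j → ℝ → ℝ) => exists_forall_isAlmostContinuous_smul_add <| by
      have hf : #({f₀} ∪ range f : Set (ℝ → ℝ)) < eContinuum := by
        refine (mk_union_le _ _).trans_lt (add_lt_of_lt aleph0_lt_eContinuum.le ?_ ?_)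
        · exact mk_singleton f₀ ▸ one_lt_aleph0.trans aleph0_lt_eContinuum
        · exact mk_range_le.trans_lt (by simpa using mk_Iio_lt j (by simp))
      have hV := (mk_span_le (R := ℝ) ({f₀} ∪ range f)).trans_lt
        (max_lt hf (mk_real ▸ continuum_lt_eContinuum))
      exact (mk_union_le _ _).trans_lt
        (add_lt_of_lt aleph0_lt_eContinuum.le hV (mk_image_le.trans_lt hV))
  have hnotMem : ∀ j, H j ∉ span ℝ ({f₀} ∪ H '' Iio j) := fun j hj =>
    not_isAlmostContinuous_ite_le_zero <| by
      simpa using hH j 1 one_ne_zero (u - H j) (Or.inr ⟨H j, hj, rfl⟩)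
  refine ⟨H, linearIndependent_of_forall_notMem_span_image_Iio fun j hj =>
    hnotMem j (span_mono subset_union_right hj), forall_mem_span_union_range ?_ ?_⟩
  · intro v hv
    obtain ⟨c, rfl⟩ := mem_span_singleton.1 hv
    exact smul_mem_almostContinuousOrZero hf₀ c
  · exact fun j c hc w hw => Or.inl (hH j c hc w (Or.inl hw))

theorem exists_mem_submodule_subset_almostContinuousOrZero {f : ℝ → ℝ}
    (hf : f ∈ almostContinuousOrZero) : ∃ B : Submodule ℝ (ℝ → ℝ), f ∈ B ∧
      (B : Set (ℝ → ℝ)) ⊆ almostContinuousOrZero ∧ eContinuum ≤ Module.rank ℝ B := by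
  obtain ⟨H, hH, hHf⟩ := exists_linearIndependent_span_union_range_subset hf
  refine ⟨span ℝ ({f} ∪ range H), subset_span (Or.inl rfl), hHf, ?_⟩
  calc eContinuum = Module.rank ℝ (span ℝ (range H)) := by
        rw [← image_univ, hH.rank_span_image, mk_univ, mk_ord_toType]
    _ ≤ _ := rank_mono (span_mono subset_union_right)

theorem continuum_le_mk_setOf_submodule_subset_almostContinuousOrZero :
    𝔠 ≤ #{B : Submodule ℝ (ℝ → ℝ) |
      (B : Set (ℝ → ℝ)) ⊆ almostContinuousOrZero ∧ eContinuum ≤ Module.rank ℝ B} := by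
  obtain ⟨H, hH, hH0⟩ := exists_linearIndependent_span_union_range_subset (f₀ := 0) (Or.inr rfl)
  have : Infinite eContinuum.ord.ToType :=
    infinite_iff.2 (by rw [mk_ord_toType]; exact aleph0_lt_eContinuum.le)
  have hrank : ∀ i, eContinuum ≤ Module.rank ℝ (span ℝ (H '' {i}ᶜ)) := fun i => by
    rw [hH.rank_span_image, mk_compl_of_infinite, mk_ord_toType]
    rw [mk_singleton, mk_ord_toType]
    exact one_lt_aleph0.trans aleph0_lt_eContinuum
  calc 𝔠 ≤ eContinuum := continuum_lt_eContinuum.le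
    _ = #eContinuum.ord.ToType := (mk_ord_toType _).symm
    _ ≤ _ := mk_le_of_injective (f := fun i => ⟨span ℝ (H '' {i}ᶜ),
        fun f hf => hH0 (span_mono ((image_subset_range _ _).trans subset_union_right) hf),
        hrank i⟩)
      fun i j hij => hH.injective_span_image_compl_singleton (congrArg Subtype.val hij)

/-- **Corollary.** The family `AC(ℝ)` of almost continuous functions has property
`B(e_𝔠, 𝔠)`: `AC(ℝ) ∪ {0}` is the union of at least `𝔠` many linear subspaces of `ℝ^ℝ`,
each contained in `AC(ℝ) ∪ {0}` and each of dimension at least `e_𝔠`. -/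
theorem almostContinuous_property_B :
    ∃ 𝓑 : Set (Submodule ℝ (ℝ → ℝ)),
      Cardinal.continuum ≤ #𝓑 ∧
      (∀ B ∈ 𝓑, (B : Set (ℝ → ℝ)) ⊆ {f | IsAlmostContinuous f} ∪ {0} ∧
        eContinuum ≤ Module.rank ℝ B) ∧
      {f | IsAlmostContinuous f} ∪ {0} = ⋃ B ∈ 𝓑, (B : Set (ℝ → ℝ)) := by
  refine ⟨_, continuum_le_mk_setOf_submodule_subset_almostContinuousOrZero, fun B hB => hB,
    ?_⟩
  refine Subset.antisymm (fun f hf => ?_) (iUnion₂_subset fun B hB => hB.1)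
  obtain ⟨B, hfB, hB⟩ := exists_mem_submodule_subset_almostContinuousOrZero hf
  exact mem_biUnion hB hfB
end
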